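/- arXiv:2509.08403 — 2 statements merged into one kernel-verified Lean document; each statement's English description precedes it below -/
import Mathlib

section
/- Let f₁ = (x²+y²+z²)³ + (x³+y³+z³)² ∈ ℂ[x,y,z] (Zariski's six-cuspidal sextic). Then the set of nonzero points v ∈ ℂ³ at which all three partial derivatives ∂f₁/∂x, ∂f₁/∂y, ∂f₁/∂z vanish determines exactly six points of the projective plane ℙ²(ℂ) (i.e., exactly six points up to nonzero scalar), and every such v satisfies v₁² + v₂² + v₃² = 0; in other words, all six singular points of the sextic f₁ = 0 lie on the conic x² + y² + z² = 0. -/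
open MvPolynomial

noncomputable section

/-- The polynomial ring `S = ℂ[x,y,z]`. -/
abbrev S := MvPolynomial (Fin 3) ℂ

/-- Zariski's six-cuspidal sextic. -/
noncomputable def f₁ : S :=
  (X 0 ^ 2 + X 1 ^ 2 + X 2 ^ 2) ^ 3 + (X 0 ^ 3 + X 1 ^ 3 + X 2 ^ 3) ^ 2

/-- Oka's six-cuspidal sextic. -/
noncomputable def f₂ : S :=
  X 0 ^ 6 - X 0 ^ 4 * X 1 ^ 2 + C (1/3 : ℂ) * X 0 ^ 2 * X 1 ^ 4 - C (1/27 : ℂ) * X 1 ^ 6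
    + C (2 : ℂ) * X 0 ^ 3 * X 1 ^ 2 * X 2 - C (2 : ℂ) * X 0 ^ 4 * X 2 ^ 2
    - C (5/3 : ℂ) * X 0 ^ 2 * X 1 ^ 2 * X 2 ^ 2 - C (2/9 : ℂ) * X 1 ^ 4 * X 2 ^ 2
    + C (4/3 : ℂ) * X 0 ^ 2 * X 2 ^ 4 + C (5/9 : ℂ) * X 1 ^ 2 * X 2 ^ 4
    - C (8/27 : ℂ) * X 2 ^ 6

/-! ### Auxiliary material -/

lemma eval_pderiv_f₁ (v : Fin 3 → ℂ) (i : Fin 3) :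
    eval v (pderiv i f₁) = 6 * v i * ((v 0 ^ 2 + v 1 ^ 2 + v 2 ^ 2) ^ 2
      + (v 0 ^ 3 + v 1 ^ 3 + v 2 ^ 3) * v i) := by
  fin_cases i <;>
    simp [f₁, pderiv_pow, pderiv_X, Fin.ext_iff] <;> ring

/-- The univariate sextic whose roots are the first affine coordinates of the cusps. -/
noncomputable def Pz : Polynomial ℂ :=
  2 * Polynomial.X ^ 6 + 3 * Polynomial.X ^ 4 + 2 * Polynomial.X ^ 3
    + 3 * Polynomial.X ^ 2 + 2

lemma Pz_sep : Pz.Separable := by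
  have hd : Pz.derivative = 12 * Polynomial.X ^ 5 + 12 * Polynomial.X ^ 3
      + 6 * Polynomial.X ^ 2 + 6 * Polynomial.X := by
    simp [Pz, map_ofNat]
    ring
  refine ⟨Polynomial.C (1/144 : ℂ) * (72 + 114 * Polynomial.X + 120 * Polynomial.X ^ 2
      + 204 * Polynomial.X ^ 3 - 12 * Polynomial.X ^ 4),
    Polynomial.C (1/144 : ℂ) * (-38 - 38 * Polynomial.X - 35 * Polynomial.X ^ 2
      - 19 * Polynomial.X ^ 3 - 34 * Polynomial.X ^ 4 + 2 * Polynomial.X ^ 5), ?_⟩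
  rw [hd, Pz]
  have h144 : (Polynomial.C (1/144 : ℂ)) * 144 = 1 := by
    rw [← map_ofNat Polynomial.C 144, ← Polynomial.C_mul]
    norm_num
  linear_combination h144

lemma Pz_natDegree : Pz.natDegree = 6 := by
  unfold Pz
  compute_degree!

lemma Pz_ne_zero : Pz ≠ 0 := by
  intro h
  have h2 : Polynomial.eval 0 Pz = 2 := by simp [Pz]
  rw [h] at h2
  simp at h2

lemma Pz_card : Pz.roots.toFinset.card = 6 := by
  rw [Multiset.toFinset_card_of_nodup (Polynomial.nodup_roots Pz_sep)]
  have h := (Polynomial.splits_iff_card_roots (f := Pz)).mp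
    (IsAlgClosed.splits Pz)
  rw [h, Pz_natDegree]

/-- If x²+y²=0 and x³+y³=0 then x=y=0. -/
lemma two_var_zero (x y : ℂ) (h2 : x^2 + y^2 = 0) (h3 : x^3 + y^3 = 0) :
    x = 0 ∧ y = 0 := by
  have h6 : y^6 = 0 := by
    linear_combination ((y^3 - x^3)/2) * h3 + ((x^4 - x^2*y^2 + y^4)/2) * h2
  have hy : y = 0 := by
    exact pow_eq_zero_iff (by norm_num) |>.mp h6
  have hx : x = 0 := by
    have hx2 : x^2 = 0 := by linear_combination h2 - y * hy
    exact pow_eq_zero_iff (by norm_num) |>.mp hx2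
  exact ⟨hx, hy⟩

lemma two_eq_case (x y : ℂ)
    (Ex : (x^2 + y^2)^2 + (x^3 + y^3) * x = 0)
    (Ey : (x^2 + y^2)^2 + (x^3 + y^3) * y = 0) :
    (x = 0 ∧ y = 0) ∨ (x^2 + y^2 = 0 ∧ x^3 + y^3 = 0) := by
  have hK : (x^3 + y^3) * (x - y) = 0 := by linear_combination Ex - Ey
  rcases mul_eq_zero.mp hK with hK0 | hxy
  · right
    refine ⟨?_, hK0⟩
    have hQ2 : (x^2 + y^2)^2 = 0 := by linear_combination Ex - x * hK0
    exact pow_eq_zero_iff (by norm_num) |>.mp hQ2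
  · left
    rw [sub_eq_zero] at hxy
    rw [← hxy] at Ex
    have hx4 : x^4 = 0 := by linear_combination (1/6 : ℂ) * Ex
    have hx : x = 0 := pow_eq_zero_iff (by norm_num) |>.mp hx4
    exact ⟨hx, by rw [← hxy]; exact hx⟩

lemma one_eq_case (x : ℂ) (Ex : (x^2)^2 + x^3 * x = 0) : x = 0 := by
  have hx4 : x^4 = 0 := by linear_combination (1/2 : ℂ) * Ex
  exact pow_eq_zero_iff (by norm_num) |>.mp hx4

/-- Main algebraic case analysis for the critical points. -/
lemma alg_main (a b c : ℂ) (hne : ¬(a = 0 ∧ b = 0 ∧ c = 0))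
    (ha : a * ((a^2+b^2+c^2)^2 + (a^3+b^3+c^3) * a) = 0)
    (hb : b * ((a^2+b^2+c^2)^2 + (a^3+b^3+c^3) * b) = 0)
    (hc : c * ((a^2+b^2+c^2)^2 + (a^3+b^3+c^3) * c) = 0) :
    a^2+b^2+c^2 = 0 ∧ a^3+b^3+c^3 = 0 := by
  rcases mul_eq_zero.mp ha with ha' | ha' <;>
    rcases mul_eq_zero.mp hb with hb' | hb' <;>
      rcases mul_eq_zero.mp hc with hc' | hc'
  · exact absurd ⟨ha', hb', hc'⟩ hne
  · subst ha'; subst hb'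
    have := one_eq_case c (by linear_combination hc')
    exact absurd ⟨rfl, rfl, this⟩ hne
  · subst ha'; subst hc'
    have := one_eq_case b (by linear_combination hb')
    exact absurd ⟨rfl, this, rfl⟩ hne
  · subst ha'
    rcases two_eq_case b c (by linear_combination hb') (by linear_combination hc') with
      ⟨h1, h2⟩ | ⟨h1, h2⟩
    · exact absurd ⟨rfl, h1, h2⟩ hne
    · constructor <;> [linear_combination h1; linear_combination h2]
  · subst hb'; subst hc'
    have := one_eq_case a (by linear_combination ha')
    exact absurd ⟨this, rfl, rfl⟩ hne
  · subst hb'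
    rcases two_eq_case a c (by linear_combination ha') (by linear_combination hc') with
      ⟨h1, h2⟩ | ⟨h1, h2⟩
    · exact absurd ⟨h1, rfl, h2⟩ hne
    · constructor <;> [linear_combination h1; linear_combination h2]
  · subst hc'
    rcases two_eq_case a b (by linear_combination ha') (by linear_combination hb') with
      ⟨h1, h2⟩ | ⟨h1, h2⟩
    · exact absurd ⟨h1, h2, rfl⟩ hne
    · constructor <;> [linear_combination h1; linear_combination h2]
  · have hK1 : (a^3+b^3+c^3) * (a - b) = 0 := by linear_combination ha' - hb'
    have hK2 : (a^3+b^3+c^3) * (a - c) = 0 := by linear_combination ha' - hc'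
    rcases mul_eq_zero.mp hK1 with hK0 | hab
    · have hQ2 : (a^2+b^2+c^2)^2 = 0 := by linear_combination ha' - a * hK0
      exact ⟨pow_eq_zero_iff (by norm_num) |>.mp hQ2, hK0⟩
    · rcases mul_eq_zero.mp hK2 with hK0 | hac
      · have hQ2 : (a^2+b^2+c^2)^2 = 0 := by linear_combination ha' - a * hK0
        exact ⟨pow_eq_zero_iff (by norm_num) |>.mp hQ2, hK0⟩
      · rw [sub_eq_zero] at hab hac
        rw [← hab, ← hac] at ha'
        have ha4 : a^4 = 0 := by linear_combination (1/12 : ℂ) * ha'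
        have ha0 : a = 0 := pow_eq_zero_iff (by norm_num) |>.mp ha4
        exact absurd ⟨ha0, by rw [← hab]; exact ha0, by rw [← hac]; exact ha0⟩ hne

/-- The parametrizing vector for a root `x`. -/
noncomputable def w3 (x : ℂ) : Fin 3 → ℂ := ![x, (1 + x^3)/(1 + x^2), 1]

lemma w3_ne (x : ℂ) : w3 x ≠ 0 := by
  intro h
  have := congrFun h 2
  simp [w3] at this

/-- The parametrization of cusps by roots of `Pz`. -/
noncomputable def gmap (x : ℂ) : Projectivization ℂ (Fin 3 → ℂ) :=
  Projectivization.mk ℂ (w3 x) (w3_ne x)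

lemma gmap_inj : Function.Injective gmap := by
  intro x x' h
  rw [gmap, gmap, Projectivization.mk_eq_mk_iff'] at h
  obtain ⟨a, ha⟩ := h
  have h2 := congrFun ha 2
  have h0 := congrFun ha 0
  simp [w3] at h2 h0
  rw [h2] at h0
  simpa using h0.symm

/-- The six singular points of Zariski's six-cuspidal sextic
`f₁ = (x²+y²+z²)³ + (x³+y³+z³)²` form exactly six points of `ℙ²(ℂ)`, and they all lie on
the conic `x² + y² + z² = 0`. -/
theorem zariski_sextic_six_cusps_on_a_conic :
    Set.ncard {p : Projectivization ℂ (Fin 3 → ℂ) |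
        ∃ (v : Fin 3 → ℂ) (hv : v ≠ 0),
          (∀ i, MvPolynomial.eval v (pderiv i f₁) = 0) ∧ p = Projectivization.mk ℂ v hv} = 6
    ∧ ∀ v : Fin 3 → ℂ, v ≠ 0 → (∀ i, MvPolynomial.eval v (pderiv i f₁) = 0) →
        v 0 ^ 2 + v 1 ^ 2 + v 2 ^ 2 = 0 := by
  have hQK : ∀ v : Fin 3 → ℂ, v ≠ 0 → (∀ i, MvPolynomial.eval v (pderiv i f₁) = 0) →
      v 0^2 + v 1^2 + v 2^2 = 0 ∧ v 0^3 + v 1^3 + v 2^3 = 0 := by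
    intro v hv h
    apply alg_main
    · rintro ⟨h0, h1, h2⟩
      apply hv
      funext i
      fin_cases i <;> assumption
    · have h0 := h 0; rw [eval_pderiv_f₁] at h0; linear_combination (1/6 : ℂ) * h0
    · have h1 := h 1; rw [eval_pderiv_f₁] at h1; linear_combination (1/6 : ℂ) * h1
    · have h2 := h 2; rw [eval_pderiv_f₁] at h2; linear_combination (1/6 : ℂ) * h2
  refine ⟨?_, fun v hv h => (hQK v hv h).1⟩
  have hset : {p : Projectivization ℂ (Fin 3 → ℂ) |
      ∃ (v : Fin 3 → ℂ) (hv : v ≠ 0),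
        (∀ i, MvPolynomial.eval v (pderiv i f₁) = 0) ∧ p = Projectivization.mk ℂ v hv}
      = gmap '' ↑Pz.roots.toFinset := by
    ext p
    simp only [Set.mem_setOf_eq, Set.mem_image, Finset.mem_coe, Multiset.mem_toFinset]
    constructor
    · rintro ⟨v, hv, hsing, rfl⟩
      obtain ⟨hQ, hK⟩ := hQK v hv hsing
      have hc : v 2 ≠ 0 := by
        intro hv2
        rw [hv2] at hQ hK
        obtain ⟨h0, h1⟩ := two_var_zero (v 0) (v 1)
          (by linear_combination hQ) (by linear_combination hK)
        apply hv
        funext i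
        fin_cases i <;> assumption
      set x := v 0 / v 2 with hxdef
      set y := v 1 / v 2 with hydef
      have h2 : x^2 + y^2 + 1 = 0 := by
        rw [hxdef, hydef]
        field_simp
        linear_combination hQ
      have h3 : x^3 + y^3 + 1 = 0 := by
        rw [hxdef, hydef]
        field_simp
        linear_combination hK
      have hev : Polynomial.eval x Pz = 0 := by
        simp [Pz]
        linear_combination ((x^2+y^2+1)^2 - 3*(x^2+y^2+1)*y^2 + 3*y^4) * h2
          + ((x^3+y^3+1) - 2*y^3) * h3
      have hx2 : (1 : ℂ) + x^2 ≠ 0 := by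
        intro hxx
        have hy0 : y = 0 := by
          have hyy : y^2 = 0 := by linear_combination h2 - hxx
          exact pow_eq_zero_iff (by norm_num) |>.mp hyy
        have hx1 : x = 1 := by linear_combination x * hxx - h3 + y^2 * hy0
        have h20 : (2 : ℂ) = 0 := by linear_combination hxx - (x + 1) * hx1
        norm_num at h20
      have hy_eq : y = (1 + x^3)/(1 + x^2) := by
        rw [eq_div_iff hx2]
        linear_combination y * h2 - h3
      refine ⟨x, Polynomial.mem_roots'.mpr ⟨Pz_ne_zero, hev⟩, ?_⟩
      rw [gmap, Projectivization.mk_eq_mk_iff']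
      refine ⟨(v 2)⁻¹, funext fun i => ?_⟩
      fin_cases i
      · show (v 2)⁻¹ * v 0 = x
        rw [hxdef]
        exact (div_eq_inv_mul _ _).symm
      · show (v 2)⁻¹ * v 1 = (1 + x^3)/(1 + x^2)
        rw [← hy_eq, hydef]
        exact (div_eq_inv_mul _ _).symm
      · show (v 2)⁻¹ * v 2 = 1
        exact inv_mul_cancel₀ hc
    · rintro ⟨x, hx, rfl⟩
      have hev : Polynomial.eval x Pz = 0 := (Polynomial.mem_roots'.mp hx).2
      have hPx : 2*x^6 + 3*x^4 + 2*x^3 + 3*x^2 + 2 = 0 := by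
        simp [Pz] at hev
        linear_combination hev
      have hx2 : (1 : ℂ) + x^2 ≠ 0 := by
        intro hxx
        have hx0 : x = 0 := by
          linear_combination (-(1 : ℂ)/2) * hPx + ((2*x^4 + x^2 + 2*x + 2)/2) * hxx
        rw [hx0] at hxx
        norm_num at hxx
      set y := (1 + x^3)/(1 + x^2) with hy
      have hy2 : y^2 = -(1 + x^2) := by
        rw [hy, div_pow, div_eq_iff (pow_ne_zero 2 hx2)]
        linear_combination hPx
      have hy3 : y^3 = -(1 + x^3) := by
        rw [hy, div_pow, div_eq_iff (pow_ne_zero 3 hx2)]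
        linear_combination (1 + x^3) * hPx
      have h2 : x^2 + y^2 + 1 = 0 := by linear_combination hy2
      have h3 : x^3 + y^3 + 1 = 0 := by linear_combination hy3
      refine ⟨w3 x, w3_ne x, ?_, rfl⟩
      intro i
      rw [eval_pderiv_f₁]
      have e0 : w3 x 0 = x := rfl
      have e1 : w3 x 1 = y := rfl
      have e2 : w3 x 2 = 1 := rfl
      rw [e0, e1, e2,
        show x^2 + y^2 + (1:ℂ)^2 = 0 by linear_combination h2,
        show x^3 + y^3 + (1:ℂ)^3 = 0 by linear_combination h3]
      ring
  rw [hset, Set.ncard_image_of_injective _ gmap_inj, Set.ncard_coe_finset, Pz_card]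
end
end

section
/- Let f₂ = x⁶ − x⁴y² + (1/3)x²y⁴ − (1/27)y⁶ + 2x³y²z − 2x⁴z² − (5/3)x²y²z² − (2/9)y⁴z² + (4/3)x²z⁴ + (5/9)y²z⁴ − (8/27)z⁶ ∈ ℂ[x,y,z] (Oka's six-cuspidal sextic). Then the set of nonzero points v ∈ ℂ³ at which all three partial derivatives of f₂ vanish determines exactly six points of ℙ²(ℂ) (up to nonzero scalar), and the only homogeneous polynomial g ∈ ℂ[x,y,z] of degree 2 that vanishes at every such v is g = 0; in other words, the six singular points of the sextic f₂ = 0 do not lie on any conic. -/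
open MvPolynomial

noncomputable section

namespace OkaSexticProof

/-- `r = √(2/3)` as a complex number. -/
def r : ℂ := (Real.sqrt (2/3) : ℝ)

lemma hr2 : r ^ 2 = 2/3 := by
  have h : Real.sqrt (2/3) ^ 2 = 2/3 := Real.sq_sqrt (by norm_num)
  unfold r
  rw [← Complex.ofReal_pow, h]
  norm_num

lemma hrne : r ≠ 0 := by
  unfold r
  rw [Complex.ofReal_ne_zero]
  positivity

lemma pd0 (v : Fin 3 → ℂ) : MvPolynomial.eval v (MvPolynomial.pderiv 0 f₂) =
    6*v 0^5 - 4*v 0^3*v 1^2 - 8*v 0^3*v 2^2 + 6*v 0^2*v 1^2*v 2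
      + (2/3)*v 0*v 1^4 - (10/3)*v 0*v 1^2*v 2^2 + (8/3)*v 0*v 2^4 := by
  simp [f₂, pderiv_X, pderiv_mul, pderiv_pow, pderiv_C, eval_X, eval_C]
  ring

lemma pd1 (v : Fin 3 → ℂ) : MvPolynomial.eval v (MvPolynomial.pderiv 1 f₂) =
    (10/9)*v 1*v 2^4 - (8/9)*v 1^3*v 2^2 - (2/9)*v 1^5 - (10/3)*v 0^2*v 1*v 2^2
      + (4/3)*v 0^2*v 1^3 + 4*v 0^3*v 1*v 2 - 2*v 0^4*v 1 := by
  simp [f₂, pderiv_X, pderiv_mul, pderiv_pow, pderiv_C, eval_X, eval_C]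
  ring

lemma pd2 (v : Fin 3 → ℂ) : MvPolynomial.eval v (MvPolynomial.pderiv 2 f₂) =
    -(16/9)*v 2^5 + (20/9)*v 1^2*v 2^3 - (4/9)*v 1^4*v 2 + (16/3)*v 0^2*v 2^3
      - (10/3)*v 0^2*v 1^2*v 2 + 2*v 0^3*v 1^2 - 4*v 0^4*v 2 := by
  simp [f₂, pderiv_X, pderiv_mul, pderiv_pow, pderiv_C, eval_X, eval_C]
  ring

lemma wne (x y : ℂ) : (![x, y, 1] : Fin 3 → ℂ) ≠ 0 := by
  intro h
  have := congr_fun h 2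
  simp at this

/-- The projective point `[x : y : 1]`. -/
def P (x y : ℂ) : Projectivization ℂ (Fin 3 → ℂ) := Projectivization.mk ℂ ![x, y, 1] (wne x y)

lemma sing_of (x y : ℂ)
    (h0 : 6*x^5 - 4*x^3*y^2 - 8*x^3 + 6*x^2*y^2 + (2/3)*x*y^4 - (10/3)*x*y^2 + (8/3)*x = 0)
    (h1 : (10/9)*y - (8/9)*y^3 - (2/9)*y^5 - (10/3)*x^2*y + (4/3)*x^2*y^3 + 4*x^3*y - 2*x^4*y = 0)
    (h2 : -(16/9) + (20/9)*y^2 - (4/9)*y^4 + (16/3)*x^2 - (10/3)*x^2*y^2 + 2*x^3*y^2 - 4*x^4 = 0) :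
    ∀ i, MvPolynomial.eval ![x, y, 1] (MvPolynomial.pderiv i f₂) = 0 := by
  intro i
  fin_cases i
  · refine (pd0 _).trans ?_
    simp only [Matrix.cons_val_zero, Matrix.cons_val_one, Matrix.head_cons, Matrix.cons_val_two, Matrix.tail_cons]
    linear_combination h0
  · refine (pd1 _).trans ?_
    simp only [Matrix.cons_val_zero, Matrix.cons_val_one, Matrix.head_cons, Matrix.cons_val_two, Matrix.tail_cons]
    linear_combination h1
  · refine (pd2 _).trans ?_
    simp only [Matrix.cons_val_zero, Matrix.cons_val_one, Matrix.head_cons, Matrix.cons_val_two, Matrix.tail_cons]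
    linear_combination h2

lemma sing11 : ∀ i, MvPolynomial.eval ![(1:ℂ), 1, 1] (MvPolynomial.pderiv i f₂) = 0 :=
  sing_of 1 1 (by norm_num) (by norm_num) (by norm_num)

lemma sing1m1 : ∀ i, MvPolynomial.eval ![(1:ℂ), -1, 1] (MvPolynomial.pderiv i f₂) = 0 :=
  sing_of 1 (-1) (by norm_num) (by norm_num) (by norm_num)

lemma sing01 : ∀ i, MvPolynomial.eval ![(0:ℂ), 1, 1] (MvPolynomial.pderiv i f₂) = 0 :=
  sing_of 0 1 (by norm_num) (by norm_num) (by norm_num)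

lemma sing0m1 : ∀ i, MvPolynomial.eval ![(0:ℂ), -1, 1] (MvPolynomial.pderiv i f₂) = 0 :=
  sing_of 0 (-1) (by norm_num) (by norm_num) (by norm_num)

lemma singr0 : ∀ i, MvPolynomial.eval ![r, 0, 1] (MvPolynomial.pderiv i f₂) = 0 :=
  sing_of r 0 (by linear_combination (6*r^3 - 4*r) * hr2)
    (by ring) (by linear_combination (-4*r^2 + 8/3) * hr2)

lemma singmr0 : ∀ i, MvPolynomial.eval ![-r, 0, 1] (MvPolynomial.pderiv i f₂) = 0 :=
  sing_of (-r) 0 (by linear_combination (-6*r^3 + 4*r) * hr2)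
    (by ring) (by linear_combination (-4*r^2 + 8/3) * hr2)

lemma classify (v : Fin 3 → ℂ) (hv : v ≠ 0)
    (hs : ∀ i, MvPolynomial.eval v (MvPolynomial.pderiv i f₂) = 0) :
    ∃ t : ℂ, t ≠ 0 ∧ (v = t • ![1, 1, 1] ∨ v = t • ![1, -1, 1] ∨ v = t • ![0, 1, 1]
      ∨ v = t • ![0, -1, 1] ∨ v = t • ![r, 0, 1] ∨ v = t • ![-r, 0, 1]) := by
  have E1 := (pd0 v).symm.trans (hs 0)
  have E2 := (pd1 v).symm.trans (hs 1)
  have E3 := (pd2 v).symm.trans (hs 2)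
  set a := v 0 with ha0
  set b := v 1 with hb0
  set c := v 2 with hc0
  have hvec : ∀ x y z : ℂ, a = x → b = y → c = z → v = ![x, y, z] := by
    intro x y z hx hy hz
    funext i
    fin_cases i
    · exact (ha0.symm.trans hx)
    · exact (hb0.symm.trans hy)
    · exact (hc0.symm.trans hz)
  by_cases hc : c = 0
  · exfalso
    rw [hc] at E1 E2 E3
    by_cases ha : a = 0
    · rw [ha] at E2
      have hb5 : b ^ 5 = 0 := by linear_combination (-9/2 : ℂ) * E2
      have hb : b = 0 := by simpa using hb5
      refine hv ?_
      rw [hvec 0 0 0 ha hb hc]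
      funext i; fin_cases i <;> rfl
    · have h1 : ((2/3 : ℂ) * a) * (3*a^2 - b^2)^2 = 0 := by linear_combination E1
      have h2 : (3*a^2 - b^2)^2 = 0 := by
        rcases mul_eq_zero.mp h1 with h | h
        · exact absurd (by linear_combination (3/2 : ℂ) * h) ha
        · exact h
      have h3 : 3*a^2 - b^2 = 0 := by simpa using h2
      have h5 : a ^ 5 = 0 := by linear_combination (1/6 : ℂ) * E3 + (1/3 : ℂ) * a^3 * h3
      exact ha (by simpa using h5)
  · refine ⟨c, hc, ?_⟩
    by_cases hb : b = 0
    · rw [hb] at E1 E3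
      have h1 : ((-4 : ℂ) * c) * (a^2 - (2/3)*c^2)^2 = 0 := by linear_combination E3
      have h2 : a^2 - (2/3)*c^2 = 0 := by
        have := (mul_eq_zero.mp h1).resolve_left (by
          intro h; exact hc (by linear_combination (-1/4 : ℂ) * h))
        simpa using this
      have h3 : (a - r*c) * (a + r*c) = 0 := by linear_combination h2 - c^2 * hr2
      rcases mul_eq_zero.mp h3 with h | h
      · refine Or.inr (Or.inr (Or.inr (Or.inr (Or.inl ?_))))
        have hav : a = c * r := by linear_combination h
        rw [hvec (c*r) 0 c hav hb rfl]
        funext i; fin_cases i <;> simp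
      · refine Or.inr (Or.inr (Or.inr (Or.inr (Or.inr ?_))))
        have hav : a = c * (-r) := by linear_combination h
        rw [hvec (c*(-r)) 0 c hav hb rfl]
        funext i; fin_cases i <;> simp
    · by_cases ha : a = 0
      · rw [ha] at E2 E3
        have h1 : ((-2/9 : ℂ) * b) * ((b^2 - c^2) * (b^2 + 5*c^2)) = 0 := by
          linear_combination E2
        have h1' : (b^2 - c^2) * (b^2 + 5*c^2) = 0 :=
          (mul_eq_zero.mp h1).resolve_left (by
            intro h; exact hb (by linear_combination (-9/2 : ℂ) * h))
        have h2 : ((-4/9 : ℂ) * c) * ((b^2 - c^2) * (b^2 - 4*c^2)) = 0 := by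
          linear_combination E3
        have h2' : (b^2 - c^2) * (b^2 - 4*c^2) = 0 :=
          (mul_eq_zero.mp h2).resolve_left (by
            intro h; exact hc (by linear_combination (-9/4 : ℂ) * h))
        have hbc : (b - c) * (b + c) = 0 := by
          rcases mul_eq_zero.mp h1' with h | h
          · linear_combination h
          · rcases mul_eq_zero.mp h2' with h' | h'
            · linear_combination h'
            · exact absurd (by
                have h9 : (9 : ℂ) * c^2 = 0 := by linear_combination h - h'
                have : c^2 = 0 := by linear_combination (1/9 : ℂ) * h9
                simpa using this) hc
        rcases mul_eq_zero.mp hbc with h | h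
        · refine Or.inr (Or.inr (Or.inl ?_))
          rw [hvec 0 (c*1) c ha (by linear_combination h) rfl]
          funext i; fin_cases i <;> simp
        · refine Or.inr (Or.inr (Or.inr (Or.inl ?_)))
          rw [hvec 0 (c*(-1)) c ha (by linear_combination h) rfl]
          funext i; fin_cases i <;> simp
      · have hA : ((3 : ℂ) * (a^2 * b^2)) * ((a - c) * (a - 2*c)) = 0 := by
          linear_combination c * E1 + (3/2 : ℂ) * a * E3
        have h12 : (a - c) * (a - 2*c) = 0 :=
          (mul_eq_zero.mp hA).resolve_left (by
            intro h
            have : a^2 * b^2 = 0 := by linear_combination (1/3 : ℂ) * h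
            rcases mul_eq_zero.mp this with h' | h'
            · exact ha (by simpa using h')
            · exact hb (by simpa using h'))
        rcases mul_eq_zero.mp h12 with h | h
        · have hac : a = c := by linear_combination h
          rw [hac] at E1
          have h1 : ((2/3 : ℂ) * c) * ((b - c) * (b + c))^2 = 0 := by linear_combination E1
          have h2 : (b - c) * (b + c) = 0 := by
            have := (mul_eq_zero.mp h1).resolve_left (by
              intro h'; exact hc (by linear_combination (3/2 : ℂ) * h'))
            simpa using this
          rcases mul_eq_zero.mp h2 with h' | h'
          · refine Or.inl ?_
            rw [hvec (c*1) (c*1) c (by linear_combination hac) (by linear_combination h') rfl]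
            funext i; fin_cases i <;> simp
          · refine Or.inr (Or.inl ?_)
            rw [hvec (c*1) (c*(-1)) c (by linear_combination hac) (by linear_combination h') rfl]
            funext i; fin_cases i <;> simp
        · exfalso
          have ha2c : a = 2*c := by linear_combination h
          rw [ha2c] at E1 E2
          have hB : ((12 : ℂ) * b * c^3) * (b^2 + 5*c^2) = 0 := by
            linear_combination b * E1 + 6 * c * E2
          have h5 : b^2 + 5*c^2 = 0 :=
            (mul_eq_zero.mp hB).resolve_left (by
              intro h'
              rcases mul_eq_zero.mp h' with h'' | h''
              · rcases mul_eq_zero.mp h'' with h3 | h3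
                · norm_num at h3
                · exact hb h3
              · exact hc (by simpa using h''))
          have h240 : (240 : ℂ) * c^5 = 0 := by
            linear_combination E1 - (4/3 : ℂ) * c * (b^2 - 16*c^2) * h5
          have : c^5 = 0 := by linear_combination (1/240 : ℂ) * h240
          exact hc (by simpa using this)



lemma mk_w_inj {x y x' y' : ℂ} (h : P x y = P x' y') : x = x' ∧ y = y' := by
  rw [P, P, Projectivization.mk_eq_mk_iff] at h
  obtain ⟨u, hu⟩ := h
  have h0 := congr_fun hu 0
  have h1 := congr_fun hu 1
  have h2 := congr_fun hu 2
  simp [Units.smul_def] at h0 h1 h2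
  rw [h2] at h0 h1
  rw [Units.val_one, one_mul] at h0 h1
  exact ⟨h0.symm, h1.symm⟩

lemma P_ne {x y x' y' : ℂ} (h : ¬(x = x' ∧ y = y')) : P x y ≠ P x' y' :=
  fun he => h (mk_w_inj he)

lemma rmr : r ≠ -r := by
  intro h
  apply hrne
  have h2 : (2 : ℂ) * r = 0 := by linear_combination h
  linear_combination (1/2 : ℂ) * h2

/-- canonical degree-(i+j+k) exponent vector -/
def e (i j k : ℕ) : Fin 3 →₀ ℕ :=
  Finsupp.single 0 i + Finsupp.single 1 j + Finsupp.single 2 k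

lemma e_apply (i j k : ℕ) : e i j k 0 = i ∧ e i j k 1 = j ∧ e i j k 2 = k := by
  refine ⟨?_, ?_, ?_⟩ <;> simp [e, Finsupp.single_apply]

lemma fs_repr (m : Fin 3 →₀ ℕ) : m = e (m 0) (m 1) (m 2) := by
  ext i
  fin_cases i <;> simp [e, Finsupp.single_apply]

lemma e_eq_iff {i j k i' j' k' : ℕ} : e i j k = e i' j' k' ↔ (i = i' ∧ j = j' ∧ k = k') := by
  constructor
  · intro h
    refine ⟨?_, ?_, ?_⟩
    · have := DFunLike.congr_fun h 0
      simpa [e, Finsupp.single_apply] using this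
    · have := DFunLike.congr_fun h 1
      simpa [e, Finsupp.single_apply] using this
    · have := DFunLike.congr_fun h 2
      simpa [e, Finsupp.single_apply] using this
  · rintro ⟨rfl, rfl, rfl⟩; rfl

lemma degree_eq (m : Fin 3 →₀ ℕ) : m.degree = m 0 + m 1 + m 2 := by
  rw [Finsupp.degree_apply]
  rw [show ∑ i ∈ m.support, m i = ∑ i : Fin 3, m i from
    Finset.sum_subset (Finset.subset_univ _) (fun i _ hi => Finsupp.notMem_support_iff.mp hi)]
  exact Fin.sum_univ_three m

lemma quad_decomp (g : S) (hg : g.IsHomogeneous 2) :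
    g = MvPolynomial.monomial (e 2 0 0) (MvPolynomial.coeff (e 2 0 0) g)
      + MvPolynomial.monomial (e 0 2 0) (MvPolynomial.coeff (e 0 2 0) g)
      + MvPolynomial.monomial (e 0 0 2) (MvPolynomial.coeff (e 0 0 2) g)
      + MvPolynomial.monomial (e 1 1 0) (MvPolynomial.coeff (e 1 1 0) g)
      + MvPolynomial.monomial (e 1 0 1) (MvPolynomial.coeff (e 1 0 1) g)
      + MvPolynomial.monomial (e 0 1 1) (MvPolynomial.coeff (e 0 1 1) g) := by
  apply MvPolynomial.ext
  intro m
  simp only [MvPolynomial.coeff_add, MvPolynomial.coeff_monomial]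
  by_cases hd : m 0 + m 1 + m 2 = 2
  · rcases (by omega : (m 0 = 2 ∧ m 1 = 0 ∧ m 2 = 0) ∨ (m 0 = 0 ∧ m 1 = 2 ∧ m 2 = 0)
        ∨ (m 0 = 0 ∧ m 1 = 0 ∧ m 2 = 2) ∨ (m 0 = 1 ∧ m 1 = 1 ∧ m 2 = 0)
        ∨ (m 0 = 1 ∧ m 1 = 0 ∧ m 2 = 1) ∨ (m 0 = 0 ∧ m 1 = 1 ∧ m 2 = 1)) with
      ⟨h0,h1,h2⟩|⟨h0,h1,h2⟩|⟨h0,h1,h2⟩|⟨h0,h1,h2⟩|⟨h0,h1,h2⟩|⟨h0,h1,h2⟩ <;>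
    rw [fs_repr m, h0, h1, h2] <;> simp [e_eq_iff]
  · have hz : MvPolynomial.coeff m g = 0 := hg.coeff_eq_zero (by rw [degree_eq]; exact hd)
    rw [hz]
    have hne : ∀ i j k : ℕ, i + j + k = 2 → ¬(e i j k = m) := by
      intro i j k hijk he
      apply hd
      have h0 := DFunLike.congr_fun he 0
      have h1 := DFunLike.congr_fun he 1
      have h2 := DFunLike.congr_fun he 2
      simp [e, Finsupp.single_apply] at h0 h1 h2
      omega
    rw [if_neg (hne 2 0 0 rfl), if_neg (hne 0 2 0 rfl), if_neg (hne 0 0 2 rfl),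
      if_neg (hne 1 1 0 rfl), if_neg (hne 1 0 1 rfl), if_neg (hne 0 1 1 rfl)]
    ring

lemma mono_eval (v : Fin 3 → ℂ) (i j k : ℕ) (A : ℂ) :
    MvPolynomial.eval v (MvPolynomial.monomial (e i j k) A) = A * v 0 ^ i * v 1 ^ j * v 2 ^ k := by
  have h : (MvPolynomial.monomial (e i j k) A : S) = MvPolynomial.C A * X 0 ^ i * X 1 ^ j * X 2 ^ k := by
    simp [e, X_pow_eq_monomial, MvPolynomial.monomial_mul, MvPolynomial.C_mul_monomial, add_assoc]
  rw [h]
  simp [mul_assoc]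



theorem main : Set.ncard {p : Projectivization ℂ (Fin 3 → ℂ) |
        ∃ (v : Fin 3 → ℂ) (hv : v ≠ 0),
          (∀ i, MvPolynomial.eval v (pderiv i f₂) = 0) ∧ p = Projectivization.mk ℂ v hv} = 6
    ∧ ∀ g : S, g ∈ homogeneousSubmodule (Fin 3) ℂ 2 →
        (∀ v : Fin 3 → ℂ, v ≠ 0 → (∀ i, MvPolynomial.eval v (pderiv i f₂) = 0) →
          MvPolynomial.eval v g = 0) → g = 0 := by
  constructor
  · have hset : {p : Projectivization ℂ (Fin 3 → ℂ) |
        ∃ (v : Fin 3 → ℂ) (hv : v ≠ 0),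
          (∀ i, MvPolynomial.eval v (pderiv i f₂) = 0) ∧ p = Projectivization.mk ℂ v hv}
        = {P 1 1, P 1 (-1), P 0 1, P 0 (-1), P r 0, P (-r) 0} := by
      ext p
      simp only [Set.mem_setOf_eq, Set.mem_insert_iff, Set.mem_singleton_iff]
      constructor
      · rintro ⟨v, hv, hs, rfl⟩
        obtain ⟨t, ht, H⟩ := classify v hv hs
        have key : ∀ (x y : ℂ), v = t • ![x, y, 1] →
            Projectivization.mk ℂ v hv = P x y := by
          intro x y hxy
          rw [P, Projectivization.mk_eq_mk_iff]
          refine ⟨Units.mk0 t ht, ?_⟩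
          rw [hxy]
          rfl
        rcases H with h|h|h|h|h|h
        · exact Or.inl (key _ _ h)
        · exact Or.inr (Or.inl (key _ _ h))
        · exact Or.inr (Or.inr (Or.inl (key _ _ h)))
        · exact Or.inr (Or.inr (Or.inr (Or.inl (key _ _ h))))
        · exact Or.inr (Or.inr (Or.inr (Or.inr (Or.inl (key _ _ h)))))
        · exact Or.inr (Or.inr (Or.inr (Or.inr (Or.inr (key _ _ h)))))
      · rintro (rfl|rfl|rfl|rfl|rfl|rfl)
        · exact ⟨_, wne 1 1, sing11, rfl⟩
        · exact ⟨_, wne 1 (-1), sing1m1, rfl⟩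
        · exact ⟨_, wne 0 1, sing01, rfl⟩
        · exact ⟨_, wne 0 (-1), sing0m1, rfl⟩
        · exact ⟨_, wne r 0, singr0, rfl⟩
        · exact ⟨_, wne (-r) 0, singmr0, rfl⟩
    rw [hset]
    rw [Set.ncard_insert_of_notMem (by
          simp only [Set.mem_insert_iff, Set.mem_singleton_iff]
          push_neg
          exact ⟨P_ne (by rintro ⟨-, h⟩; norm_num at h),
            P_ne (by rintro ⟨h, -⟩; norm_num at h),
            P_ne (by rintro ⟨h, -⟩; norm_num at h),
            P_ne (by rintro ⟨-, h⟩; norm_num at h),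
            P_ne (by rintro ⟨-, h⟩; norm_num at h)⟩),
        Set.ncard_insert_of_notMem (by
          simp only [Set.mem_insert_iff, Set.mem_singleton_iff]
          push_neg
          exact ⟨P_ne (by rintro ⟨h, -⟩; norm_num at h),
            P_ne (by rintro ⟨h, -⟩; norm_num at h),
            P_ne (by rintro ⟨-, h⟩; norm_num at h),
            P_ne (by rintro ⟨-, h⟩; norm_num at h)⟩),
        Set.ncard_insert_of_notMem (by
          simp only [Set.mem_insert_iff, Set.mem_singleton_iff]
          push_neg
          exact ⟨P_ne (by rintro ⟨-, h⟩; norm_num at h),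
            P_ne (by rintro ⟨-, h⟩; norm_num at h),
            P_ne (by rintro ⟨-, h⟩; norm_num at h)⟩),
        Set.ncard_insert_of_notMem (by
          simp only [Set.mem_insert_iff, Set.mem_singleton_iff]
          push_neg
          exact ⟨P_ne (by rintro ⟨-, h⟩; norm_num at h),
            P_ne (by rintro ⟨-, h⟩; norm_num at h)⟩),
        Set.ncard_insert_of_notMem (by
          simp only [Set.mem_singleton_iff]
          exact P_ne (by rintro ⟨h, -⟩; exact rmr h)),
        Set.ncard_singleton]
  · intro g hg hvan
    have hg' : g.IsHomogeneous 2 := (mem_homogeneousSubmodule 2 g).mp hg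
    have hd := quad_decomp g hg'
    have heval : ∀ x y : ℂ, MvPolynomial.eval ![x, y, 1] g =
        MvPolynomial.coeff (e 2 0 0) g * x^2 + MvPolynomial.coeff (e 0 2 0) g * y^2
        + MvPolynomial.coeff (e 0 0 2) g + MvPolynomial.coeff (e 1 1 0) g * (x*y)
        + MvPolynomial.coeff (e 1 0 1) g * x + MvPolynomial.coeff (e 0 1 1) g * y := by
      intro x y
      conv_lhs => rw [hd]
      simp only [map_add, mono_eval, Matrix.cons_val_zero, Matrix.cons_val_one,
        Matrix.head_cons, Matrix.cons_val_two, Matrix.tail_cons]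
      ring
    have q1 := hvan ![1, 1, 1] (wne 1 1) sing11
    have q2 := hvan ![1, -1, 1] (wne 1 (-1)) sing1m1
    have q3 := hvan ![0, 1, 1] (wne 0 1) sing01
    have q4 := hvan ![0, -1, 1] (wne 0 (-1)) sing0m1
    have q5 := hvan ![r, 0, 1] (wne r 0) singr0
    have q6 := hvan ![-r, 0, 1] (wne (-r) 0) singmr0
    rw [heval 1 1] at q1
    rw [heval 1 (-1)] at q2
    rw [heval 0 1] at q3
    rw [heval 0 (-1)] at q4
    rw [heval r 0] at q5
    rw [heval (-r) 0] at q6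
    have hE : MvPolynomial.coeff (e 1 0 1) g = 0 := by
      have h2r : (2*r) * MvPolynomial.coeff (e 1 0 1) g = 0 := by linear_combination q5 - q6
      rcases mul_eq_zero.mp h2r with h | h
      · exact absurd (by linear_combination (1/2 : ℂ) * h) hrne
      · exact h
    have hF : MvPolynomial.coeff (e 0 1 1) g = 0 := by
      linear_combination (1/2 : ℂ) * q3 - (1/2 : ℂ) * q4
    have hD : MvPolynomial.coeff (e 1 1 0) g = 0 := by
      linear_combination (1/2 : ℂ) * q1 - (1/2 : ℂ) * q2 - hF
    have hABC : MvPolynomial.coeff (e 2 0 0) g + MvPolynomial.coeff (e 0 2 0) g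
        + MvPolynomial.coeff (e 0 0 2) g = 0 := by
      linear_combination (1/2 : ℂ) * q1 + (1/2 : ℂ) * q2 - hE
    have hBC : MvPolynomial.coeff (e 0 2 0) g + MvPolynomial.coeff (e 0 0 2) g = 0 := by
      linear_combination (1/2 : ℂ) * q3 + (1/2 : ℂ) * q4
    have hA : MvPolynomial.coeff (e 2 0 0) g = 0 := by linear_combination hABC - hBC
    have hAC : (2/3 : ℂ) * MvPolynomial.coeff (e 2 0 0) g
        + MvPolynomial.coeff (e 0 0 2) g = 0 := by
      linear_combination (1/2 : ℂ) * q5 + (1/2 : ℂ) * q6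
        - MvPolynomial.coeff (e 2 0 0) g * hr2
    have hC : MvPolynomial.coeff (e 0 0 2) g = 0 := by
      linear_combination hAC - (2/3 : ℂ) * hA
    have hB : MvPolynomial.coeff (e 0 2 0) g = 0 := by linear_combination hBC - hC
    rw [hd, hA, hB, hC, hD, hE, hF]
    simp

end OkaSexticProof

/-- The six singular points of Oka's six-cuspidal sextic `f₂` form exactly six points of
`ℙ²(ℂ)`, and the only homogeneous polynomial of degree 2 vanishing at all of them is `0`,
i.e. the six cusps do not lie on any conic. -/
theorem oka_sextic_six_cusps_not_on_a_conic :
    Set.ncard {p : Projectivization ℂ (Fin 3 → ℂ) |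
        ∃ (v : Fin 3 → ℂ) (hv : v ≠ 0),
          (∀ i, MvPolynomial.eval v (pderiv i f₂) = 0) ∧ p = Projectivization.mk ℂ v hv} = 6
    ∧ ∀ g : S, g ∈ homogeneousSubmodule (Fin 3) ℂ 2 →
        (∀ v : Fin 3 → ℂ, v ≠ 0 → (∀ i, MvPolynomial.eval v (pderiv i f₂) = 0) →
          MvPolynomial.eval v g = 0) → g = 0 := OkaSexticProof.main
end
end
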